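/- arXiv:2406.05121 — 2 statements merged into one kernel-verified Lean document; each statement's English description precedes it below -/
import Mathlib

section
/- Let 𝔉 = {χ} ∪ Ψ be a semi-discrete Parseval frame and let P ⊆ Ψ^N be nonempty for some N ∈ ℕ₀. Then for all f, g ∈ L²(ℝᵈ): (Σ_{p∈P} ‖(U[p]f)*χ − (U[p]g)*χ‖₂²)^{1/2} ≤ (Σ_{p∈P} ‖U[p]f − U[p]g‖₂²)^{1/2} ≤ ‖f − g‖₂. -/
open MeasureTheory Filter
open scoped ENNReal RealInnerProductSpace

noncomputable section

/-- Euclidean space ℝ^d. -/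
abbrev Ed (d : ℕ) := EuclideanSpace ℝ (Fin d)

/-- Convolution of two complex-valued functions on ℝ^d. -/
noncomputable def conv {d : ℕ} (f g : Ed d → ℂ) : Ed d → ℂ :=
  MeasureTheory.convolution f g (ContinuousLinearMap.mul ℂ ℂ) volume

/-- Squared L² norm (the "energy") of a function, valued in ℝ≥0∞. -/
noncomputable def en {d : ℕ} (f : Ed d → ℂ) : ℝ≥0∞ := (eLpNorm f 2 volume) ^ 2

/-- The scattering propagator along a path (a list of filters):
`U[e] f = f`, `U[(ψ₁,…,ψ_N)] f = |…|f*ψ₁|…*ψ_N|`. -/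
noncomputable def Uprop {d : ℕ} : List (Ed d → ℂ) → (Ed d → ℂ) → (Ed d → ℂ)
  | [], f => f
  | ψ :: rest, f => Uprop rest (fun x => (‖conv f ψ x‖ : ℂ))

/-- Scattering propagator along a path of indices `p : Fin N → ι` in a filter family `F`. -/
noncomputable def Upath {d : ℕ} {ι : Type*} (F : ι → Ed d → ℂ) {N : ℕ}
    (p : Fin N → ι) (f : Ed d → ℂ) : Ed d → ℂ :=
  Uprop (List.ofFn fun i => F (p i)) f

/-- Energy remainder `W_N[Φ](f)` (ℝ≥0∞-valued), for the subfamily of filters indexed by `Φ`. -/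
noncomputable def WNe {d : ℕ} (ψ : ℕ → Ed d → ℂ) (Φ : Set ℕ) (N : ℕ)
    (f : Ed d → ℂ) : ℝ≥0∞ :=
  ∑' p : Fin N → Φ, en (Upath ψ (fun i => ((p i : ℕ))) f)
section Aux
variable {d : ℕ}

lemma memL2_reflect {h : Ed d → ℂ} (hh : MemLp h 2 volume) (x : Ed d) :
    MemLp (fun t => h (x - t)) 2 volume :=
  hh.comp_measurePreserving (Measure.measurePreserving_sub_left volume x)

lemma convExistsAt {f h : Ed d → ℂ} (hf : MemLp f 2 volume) (hh : MemLp h 2 volume) (x : Ed d) :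
    Integrable (fun t => f t * h (x - t)) volume := by
  have := ((memL2_reflect hh x).smul (φ := f) hf
    (p := 2) (q := 2) (r := 1) (hpqr := ⟨by rw [inv_one, ENNReal.inv_two_add_inv_two]⟩)) -- MemLp (f • fun t => h (x-t)) 1
  rw [memLp_one_iff_integrable] at this
  simpa [Pi.smul_apply', smul_eq_mul, Pi.mul_def] using this

lemma conv_sub_eq {f g h : Ed d → ℂ} (hf : MemLp f 2 volume) (hg : MemLp g 2 volume)
    (hh : MemLp h 2 volume) (x : Ed d) :
    conv (fun y => f y - g y) h x = conv f h x - conv g h x := by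
  simp only [conv, convolution_def, ContinuousLinearMap.mul_apply', sub_mul]
  exact integral_sub (convExistsAt hf hh x) (convExistsAt hg hh x)

lemma conv_aesm {f h : Ed d → ℂ} (hf : MemLp f 2 volume) (hh : MemLp h 2 volume) :
    AEStronglyMeasurable (conv f h) volume := by
  have h1 := hf.1.convolution_integrand (L := ContinuousLinearMap.mul ℂ ℂ) hh.1
  exact h1.integral_prod_right'

end Aux

section Main
variable {d : ℕ} {χ : Ed d → ℂ} {ψ : ℕ → Ed d → ℂ}

lemma en_mono {F G : Ed d → ℂ} (h : ∀ x, ‖F x‖ ≤ ‖G x‖) : en F ≤ en G := by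
  unfold en
  exact pow_le_pow_left' (eLpNorm_mono h) 2

lemma en_congr {F G : Ed d → ℂ} (h : ∀ x, F x = G x) : en F = en G := by
  unfold en; rw [funext h]

variable (hψ : ∀ n, Integrable (ψ n) volume ∧ MemLp (ψ n) 2 volume)
  (hParseval : ∀ f : Ed d → ℂ, MemLp f 2 volume →
      en (conv f χ) + ∑' n : ℕ, en (conv f (ψ n)) = en f)

include hParseval in
lemma en_conv_chi_le {u : Ed d → ℂ} (hu : MemLp u 2 volume) : en (conv u χ) ≤ en u :=
  (hParseval u hu) ▸ le_self_add

include hParseval in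
lemma sum_en_conv_le {u : Ed d → ℂ} (hu : MemLp u 2 volume) :
    ∑' n : ℕ, en (conv u (ψ n)) ≤ en u :=
  (hParseval u hu) ▸ le_add_self

include hψ hParseval in
lemma memL2_conv {u : Ed d → ℂ} (hu : MemLp u 2 volume) (n : ℕ) :
    MemLp (conv u (ψ n)) 2 volume := by
  refine ⟨conv_aesm hu (hψ n).2, ?_⟩
  have h1 : en (conv u (ψ n)) ≤ en u :=
    le_trans (le_trans (ENNReal.le_tsum n) (sum_en_conv_le hParseval hu)) le_rfl
  have h2 : en u < ⊤ := by
    unfold en; exact ENNReal.pow_lt_top hu.2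
  have := lt_of_le_of_lt h1 h2
  unfold en at this
  rw [lt_top_iff_ne_top]
  intro hc
  rw [hc, ENNReal.top_pow two_ne_zero] at this
  exact lt_irrefl _ this

include hψ hParseval in
lemma memL2_U1 {u : Ed d → ℂ} (hu : MemLp u 2 volume) (n : ℕ) :
    MemLp (fun x => (‖conv u (ψ n) x‖ : ℂ)) 2 volume := by
  have h := memL2_conv hψ hParseval hu n
  refine ⟨Complex.continuous_ofReal.comp_aestronglyMeasurable h.1.norm, ?_⟩
  have : eLpNorm (fun x => (‖conv u (ψ n) x‖ : ℂ)) 2 volume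
      = eLpNorm (conv u (ψ n)) 2 volume := by
    apply eLpNorm_congr_norm_ae
    filter_upwards with x
    rw [Complex.norm_real, norm_norm]
  rw [this]; exact h.2

include hψ hParseval in
lemma memL2_Uprop : ∀ (l : List ℕ) (f : Ed d → ℂ), MemLp f 2 volume →
    MemLp (Uprop (l.map ψ) f) 2 volume := by
  intro l
  induction l with
  | nil => intro f hf; exact hf
  | cons n l ih =>
    intro f hf
    exact ih _ (memL2_U1 hψ hParseval hf n)

include hψ in
omit hParseval in
lemma en_U1_sub_le {f g : Ed d → ℂ} (hf : MemLp f 2 volume) (hg : MemLp g 2 volume) (n : ℕ) :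
    en (fun x => (‖conv f (ψ n) x‖ : ℂ) - (‖conv g (ψ n) x‖ : ℂ))
      ≤ en (conv (fun x => f x - g x) (ψ n)) := by
  refine le_trans (en_mono fun x => ?_) (le_of_eq (en_congr fun x =>
    (conv_sub_eq hf hg (hψ n).2 x).symm))
  calc ‖(‖conv f (ψ n) x‖ : ℂ) - (‖conv g (ψ n) x‖ : ℂ)‖
      = |‖conv f (ψ n) x‖ - ‖conv g (ψ n) x‖| := by
        rw [← Complex.ofReal_sub, Complex.norm_real, Real.norm_eq_abs]
    _ ≤ ‖conv f (ψ n) x - conv g (ψ n) x‖ := abs_norm_sub_norm_le _ _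

include hψ hParseval in
lemma memL2_Upath {N : ℕ} (p : Fin N → ℕ) {f : Ed d → ℂ} (hf : MemLp f 2 volume) :
    MemLp (Upath ψ p f) 2 volume := by
  have := memL2_Uprop hψ hParseval (List.ofFn p) f hf
  rwa [List.map_ofFn] at this

include hψ hParseval in
lemma key : ∀ (N : ℕ) (f g : Ed d → ℂ), MemLp f 2 volume → MemLp g 2 volume →
    (∑' p : Fin N → ℕ, en (fun x => Upath ψ p f x - Upath ψ p g x))
      ≤ en (fun x => f x - g x) := by
  intro N
  induction N with
  | zero =>
    intro f g hf hg
    rw [tsum_eq_single (default : Fin 0 → ℕ) (fun b hb => (hb (funext fun i => i.elim0)).elim)]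
    exact le_of_eq rfl
  | succ N ih =>
    intro f g hf hg
    have hre : (∑' p : Fin (N+1) → ℕ, en (fun x => Upath ψ p f x - Upath ψ p g x))
        = ∑' n : ℕ, ∑' q : Fin N → ℕ,
            en (fun x => Upath ψ (Fin.cons n q) f x - Upath ψ (Fin.cons n q) g x) := by
      rw [← (Fin.consEquiv (fun _ => ℕ)).tsum_eq, ENNReal.tsum_prod']
      rfl
    rw [hre]
    have hcons : ∀ (n : ℕ) (q : Fin N → ℕ) (u : Ed d → ℂ),
        Upath ψ (Fin.cons n q) u = Upath ψ q (fun x => (‖conv u (ψ n) x‖ : ℂ)) := by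
      intro n q u
      unfold Upath
      rw [List.ofFn_succ]
      simp only [Fin.cons_zero, Fin.cons_succ]
      rfl
    calc ∑' n : ℕ, ∑' q : Fin N → ℕ,
            en (fun x => Upath ψ (Fin.cons n q) f x - Upath ψ (Fin.cons n q) g x)
        ≤ ∑' n : ℕ, en (fun x => (‖conv f (ψ n) x‖ : ℂ) - (‖conv g (ψ n) x‖ : ℂ)) := by
          refine ENNReal.tsum_le_tsum fun n => ?_
          simp only [hcons]
          exact ih _ _ (memL2_U1 hψ hParseval hf n) (memL2_U1 hψ hParseval hg n)
      _ ≤ ∑' n : ℕ, en (conv (fun x => f x - g x) (ψ n)) :=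
          ENNReal.tsum_le_tsum fun n => en_U1_sub_le hψ hf hg n
      _ ≤ en (fun x => f x - g x) := sum_en_conv_le hParseval (hf.sub hg)

end Main

/-- Non-expansiveness of `S[P;χ]` and `U[P]`: for a semi-discrete Parseval frame and any
nonempty `P ⊆ Ψ^N`,
`Σ_{p∈P} ‖S[p;χ]f − S[p;χ]g‖₂² ≤ Σ_{p∈P} ‖U[p]f − U[p]g‖₂² ≤ ‖f−g‖₂²`
(which is the squared form of the stated chain of inequalities). -/
theorem stmt3 {d : ℕ} (χ : Ed d → ℂ) (ψ : ℕ → Ed d → ℂ)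
    (hχ : Integrable χ volume ∧ MemLp χ 2 volume)
    (hψ : ∀ n, Integrable (ψ n) volume ∧ MemLp (ψ n) 2 volume)
    (hParseval : ∀ f : Ed d → ℂ, MemLp f 2 volume →
      en (conv f χ) + ∑' n : ℕ, en (conv f (ψ n)) = en f)
    (N : ℕ) (P : Set (Fin N → ℕ)) (hP : P.Nonempty)
    (f g : Ed d → ℂ) (hf : MemLp f 2 volume) (hg : MemLp g 2 volume) :
    (∑' p : P, en (fun x => conv (Upath ψ (p : Fin N → ℕ) f) χ x
        - conv (Upath ψ (p : Fin N → ℕ) g) χ x))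
      ≤ (∑' p : P, en (fun x => Upath ψ (p : Fin N → ℕ) f x
        - Upath ψ (p : Fin N → ℕ) g x)) ∧
    (∑' p : P, en (fun x => Upath ψ (p : Fin N → ℕ) f x
        - Upath ψ (p : Fin N → ℕ) g x)) ≤ en (fun x => f x - g x) := by
  obtain ⟨hχint, hχL2⟩ := hχ
  constructor
  · refine ENNReal.tsum_le_tsum fun p => ?_
    have hu := memL2_Upath hψ hParseval (p : Fin N → ℕ) hf
    have hv := memL2_Upath hψ hParseval (p : Fin N → ℕ) hg
    have e1 : en (fun x => conv (Upath ψ (p : Fin N → ℕ) f) χ x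
          - conv (Upath ψ (p : Fin N → ℕ) g) χ x)
        = en (conv (fun x => Upath ψ (p : Fin N → ℕ) f x
          - Upath ψ (p : Fin N → ℕ) g x) χ) :=
      en_congr fun x => (conv_sub_eq hu hv hχL2 x).symm
    rw [e1]
    exact en_conv_chi_le hParseval (hu.sub hv)
  · refine le_trans (ENNReal.tsum_comp_le_tsum_of_injective Subtype.val_injective
      (fun q : Fin N → ℕ => en (fun x => Upath ψ q f x - Upath ψ q g x))) ?_
    exact key hψ hParseval N f g hf hg
end
end

section
/- Let ∅ ≠ Φ ⊆ Ψ (where {χ}∪Ψ is a semi-discrete Parseval frame) and N ∈ ℕ. Then the energy remainder functional W_N[Φ] : L²(ℝᵈ) → ℝ, f ↦ Σ_{p∈Φ^N} ‖U[p]f‖₂², is continuous. -/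
open MeasureTheory Filter
open scoped ENNReal RealInnerProductSpace

noncomputable section

/-- Real-valued energy remainder `W_N[Φ](f)` and real L² norm. -/
noncomputable def WNr {d : ℕ} (ψ : ℕ → Ed d → ℂ) (Φ : Set ℕ) (N : ℕ)
    (f : Ed d → ℂ) : ℝ :=
  (WNe ψ Φ N f).toReal

noncomputable def nrm2 {d : ℕ} (f : Ed d → ℂ) : ℝ := (eLpNorm f 2 volume).toReal

section Aux

variable {d : ℕ}

lemma convIntegrand_integrable {f φ : Ed d → ℂ} (hf : MemLp f 2 volume)
    (hφ : MemLp φ 2 volume) (x : Ed d) :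
    Integrable (fun t => f t * φ (x - t)) volume := by
  have hφx : MemLp (fun t => φ (x - t)) 2 volume :=
    hφ.comp_measurePreserving (Measure.measurePreserving_sub_left volume x)
  rw [← memLp_one_iff_integrable]
  refine ⟨hf.aestronglyMeasurable.mul hφx.aestronglyMeasurable, ?_⟩
  haveI : ENNReal.HolderTriple 2 2 1 := ⟨by rw [ENNReal.inv_two_add_inv_two, inv_one]⟩
  have h := eLpNorm_le_eLpNorm_mul_eLpNorm_of_nnnorm (p := 2) (q := 2) (r := 1)
      hf.aestronglyMeasurable hφx.aestronglyMeasurable (fun a b => a * b) 1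
      (Filter.Eventually.of_forall fun y => by simp [nnnorm_mul])
  exact lt_of_le_of_lt h (by rw [ENNReal.coe_one, one_mul]; exact ENNReal.mul_lt_top hf.2 hφx.2)

lemma conv_apply (f φ : Ed d → ℂ) (x : Ed d) :
    conv f φ x = ∫ t, f t * φ (x - t) := by
  simp [conv, convolution_def]

lemma conv_sub {f g : Ed d → ℂ} (φ : Ed d → ℂ) (hf : MemLp f 2 volume)
    (hg : MemLp g 2 volume) (hφ : MemLp φ 2 volume) (x : Ed d) :
    conv (f - g) φ x = conv f φ x - conv g φ x := by
  simp only [conv_apply]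
  rw [← integral_sub (convIntegrand_integrable hf hφ x) (convIntegrand_integrable hg hφ x)]
  congr 1; funext t; simp [sub_mul]

lemma aesm_conv {f φ : Ed d → ℂ} (hf : AEStronglyMeasurable f volume)
    (hφ : AEStronglyMeasurable φ volume) :
    AEStronglyMeasurable (conv f φ) volume :=
  (hf.convolution_integrand (ContinuousLinearMap.mul ℂ ℂ) hφ).integral_prod_right'

lemma Upath_nil (ψ : ℕ → Ed d → ℂ) (p : Fin 0 → ℕ) (f : Ed d → ℂ) :
    Upath ψ p f = f := by
  simp [Upath, Uprop]

lemma Upath_cons (ψ : ℕ → Ed d → ℂ) {N : ℕ} (n : ℕ) (q : Fin N → ℕ) (f : Ed d → ℂ) :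
    Upath ψ (Fin.cons n q) f = Upath ψ q (fun x => (‖conv f (ψ n) x‖ : ℂ)) := by
  simp [Upath, List.ofFn_succ, Uprop]

lemma Uprop_zero : ∀ (l : List (Ed d → ℂ)), Uprop l (0 : Ed d → ℂ) = 0
  | [] => rfl
  | φ :: rest => by
      have h : (fun x => (‖conv (0 : Ed d → ℂ) φ x‖ : ℂ)) = (0 : Ed d → ℂ) := by
        funext x
        simp [conv_apply]
      rw [Uprop, h]
      exact Uprop_zero rest

lemma Upath_zero (ψ : ℕ → Ed d → ℂ) {N : ℕ} (p : Fin N → ℕ) :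
    Upath ψ p (0 : Ed d → ℂ) = 0 :=
  Uprop_zero _

lemma tsum_sq_add_le {ι : Type*} [Countable ι] (b c : ι → ℝ≥0∞) :
    (∑' p, (b p + c p) ^ 2) ^ (1/2 : ℝ) ≤
      (∑' p, b p ^ 2) ^ (1/2 : ℝ) + (∑' p, c p ^ 2) ^ (1/2 : ℝ) := by
  letI : MeasurableSpace ι := ⊤
  haveI : MeasurableSingletonClass ι := ⟨fun _ => trivial⟩
  have hb : AEMeasurable b (Measure.count : Measure ι) := (measurable_of_countable b).aemeasurable
  have hc : AEMeasurable c (Measure.count : Measure ι) := (measurable_of_countable c).aemeasurable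
  have h := ENNReal.lintegral_Lp_add_le (p := 2) hb hc (by norm_num)
  simp only [lintegral_count, Pi.add_apply] at h
  have h2 : ∀ x : ℝ≥0∞, x ^ (2:ℝ) = x ^ (2:ℕ) := fun x => by
    rw [← ENNReal.rpow_natCast x 2]; norm_num
  simp only [h2] at h
  exact h

end Aux

/-- Continuity of the energy remainder `W_N[Φ] : L²(ℝᵈ) → ℝ`. -/
theorem stmt7 {d : ℕ} (χ : Ed d → ℂ) (ψ : ℕ → Ed d → ℂ)
    (hχ : Integrable χ volume ∧ MemLp χ 2 volume)
    (hψ : ∀ n, Integrable (ψ n) volume ∧ MemLp (ψ n) 2 volume)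
    (hParseval : ∀ f : Ed d → ℂ, MemLp f 2 volume →
      en (conv f χ) + ∑' n : ℕ, en (conv f (ψ n)) = en f)
    (Φ : Set ℕ) (hΦ : Φ.Nonempty) (N : ℕ) (hN : 0 < N) :
    Continuous fun F : Lp ℂ 2 (volume : Measure (Ed d)) => WNr ψ Φ N (⇑F) := by
  classical
  have hP : ∀ f : Ed d → ℂ, MemLp f 2 volume → ∑' n : ℕ, en (conv f (ψ n)) ≤ en f := by
    intro f hf
    rw [← hParseval f hf]
    exact le_add_self
  have henf : ∀ f : Ed d → ℂ, MemLp f 2 volume → en f < ⊤ := by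
    intro f hf
    rw [en]
    exact ENNReal.pow_lt_top hf.2
  have hlt : ∀ {u : Ed d → ℂ}, en u < ⊤ → eLpNorm u 2 volume < ⊤ := by
    intro u hu
    by_contra h
    rw [not_lt, top_le_iff] at h
    rw [en, h] at hu
    simp [ENNReal.top_pow] at hu
  -- one scattering step preserves membership in L²
  have hstep : ∀ (n : ℕ) (f : Ed d → ℂ), MemLp f 2 volume →
      MemLp (fun x => (‖conv f (ψ n) x‖ : ℂ)) 2 volume := by
    intro n f hf
    have hsm : AEStronglyMeasurable (conv f (ψ n)) volume :=
      aesm_conv hf.aestronglyMeasurable (hψ n).2.aestronglyMeasurable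
    have heq : eLpNorm (fun x => (‖conv f (ψ n) x‖ : ℂ)) 2 volume
        = eLpNorm (conv f (ψ n)) 2 volume :=
      eLpNorm_congr_norm_ae (Eventually.of_forall fun x => by simp)
    refine ⟨Complex.continuous_ofReal.comp_aestronglyMeasurable hsm.norm, ?_⟩
    rw [heq]
    exact hlt (lt_of_le_of_lt (le_trans (ENNReal.le_tsum n) (hP f hf)) (henf f hf))
  -- membership along paths
  have hmemU : ∀ (M : ℕ) (p : Fin M → ℕ) (f : Ed d → ℂ), MemLp f 2 volume →
      MemLp (Upath ψ p f) 2 volume := by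
    intro M
    induction M with
    | zero => intro p f hf; rw [Upath_nil]; exact hf
    | succ M ih =>
      intro p f hf
      rw [← Fin.cons_self_tail p, Upath_cons]
      exact ih _ _ (hstep _ _ hf)
  -- one-step energy difference bound
  have hstepE : ∀ (n : ℕ) (f g : Ed d → ℂ), MemLp f 2 volume → MemLp g 2 volume →
      en ((fun x => (‖conv f (ψ n) x‖ : ℂ)) - fun x => (‖conv g (ψ n) x‖ : ℂ))
        ≤ en (conv (f - g) (ψ n)) := by
    intro n f g hf hg
    have hle : eLpNorm ((fun x => (‖conv f (ψ n) x‖ : ℂ)) - fun x => (‖conv g (ψ n) x‖ : ℂ))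
        2 volume ≤ eLpNorm (conv (f - g) (ψ n)) 2 volume := by
      apply eLpNorm_mono
      intro x
      simp only [Pi.sub_apply]
      rw [conv_sub (ψ n) hf hg (hψ n).2 x]
      calc ‖(‖conv f (ψ n) x‖ : ℂ) - (‖conv g (ψ n) x‖ : ℂ)‖
          = |‖conv f (ψ n) x‖ - ‖conv g (ψ n) x‖| := by
            rw [← Complex.ofReal_sub, Complex.norm_real, Real.norm_eq_abs]
        _ ≤ ‖conv f (ψ n) x - conv g (ψ n) x‖ := abs_norm_sub_norm_le _ _
    rw [en, en]
    exact pow_le_pow_left' hle 2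
  -- the key non-expansiveness estimate
  have key : ∀ (M : ℕ) (f g : Ed d → ℂ), MemLp f 2 volume → MemLp g 2 volume →
      (∑' p : Fin M → Φ,
        en (Upath ψ (fun i => ((p i : ℕ))) f - Upath ψ (fun i => ((p i : ℕ))) g))
        ≤ en (f - g) := by
    intro M
    induction M with
    | zero =>
      intro f g hf hg
      rw [tsum_eq_single (default : Fin 0 → Φ)
        (fun b hb => absurd (Subsingleton.elim b default) hb)]
      simp only [Upath_nil]
      exact le_rfl
    | succ M ih =>
      intro f g hf hg
      have hre : (∑' p : Fin (M+1) → Φ,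
            en (Upath ψ (fun i => ((p i : ℕ))) f - Upath ψ (fun i => ((p i : ℕ))) g))
          = ∑' (a : Φ), ∑' (q : Fin M → Φ),
              en (Upath ψ (fun i => ((q i : ℕ))) (fun x => (‖conv f (ψ a) x‖ : ℂ))
                - Upath ψ (fun i => ((q i : ℕ))) (fun x => (‖conv g (ψ a) x‖ : ℂ))) := by
        rw [← Equiv.tsum_eq (Fin.consEquiv fun _ => (Φ : Set ℕ).Elem), ENNReal.tsum_prod']
        congr 1
        funext a
        congr 1
        funext q
        have hca : (fun i => (((Fin.consEquiv fun _ => (Φ : Set ℕ).Elem) (a, q) i : Φ) : ℕ))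
            = Fin.cons (a : ℕ) (fun i => ((q i : ℕ))) := by
          funext i
          refine Fin.cases ?_ (fun j => ?_) i <;> simp [Fin.consEquiv]
        rw [hca, Upath_cons, Upath_cons]
      rw [hre]
      refine le_trans (ENNReal.tsum_le_tsum fun a => ih _ _ (hstep _ _ hf) (hstep _ _ hg)) ?_
      refine le_trans (ENNReal.tsum_le_tsum fun a => hstepE _ _ _ hf hg) ?_
      refine le_trans (ENNReal.tsum_comp_le_tsum_of_injective Subtype.val_injective
        fun n => en (conv (f - g) (ψ n))) (hP _ (hf.sub hg))
  -- square-root Lipschitz bound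
  have sqrtdiff : ∀ f g : Ed d → ℂ, MemLp f 2 volume → MemLp g 2 volume →
      (WNe ψ Φ N f) ^ (1/2 : ℝ) ≤ (WNe ψ Φ N g) ^ (1/2 : ℝ) + eLpNorm (f - g) 2 volume := by
    intro f g hf hg
    have hab : ∀ p : Fin N → Φ,
        eLpNorm (Upath ψ (fun i => ((p i : ℕ))) f) 2 volume
          ≤ eLpNorm (Upath ψ (fun i => ((p i : ℕ))) g) 2 volume
            + eLpNorm (Upath ψ (fun i => ((p i : ℕ))) f
                - Upath ψ (fun i => ((p i : ℕ))) g) 2 volume := by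
      intro p
      have m1 := hmemU N (fun i => ((p i : ℕ))) f hf
      have m2 := hmemU N (fun i => ((p i : ℕ))) g hg
      have e1 : Upath ψ (fun i => ((p i : ℕ))) f
          = Upath ψ (fun i => ((p i : ℕ))) g
            + (Upath ψ (fun i => ((p i : ℕ))) f - Upath ψ (fun i => ((p i : ℕ))) g) := by
        ring
      conv_lhs => rw [e1]
      exact eLpNorm_add_le m2.1 (m1.1.sub m2.1) one_le_two
    calc (WNe ψ Φ N f) ^ (1/2 : ℝ)
        ≤ (∑' p : Fin N → Φ,
            (eLpNorm (Upath ψ (fun i => ((p i : ℕ))) g) 2 volume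
              + eLpNorm (Upath ψ (fun i => ((p i : ℕ))) f
                  - Upath ψ (fun i => ((p i : ℕ))) g) 2 volume) ^ 2) ^ (1/2 : ℝ) := by
          apply ENNReal.rpow_le_rpow _ (by norm_num)
          rw [WNe]
          apply ENNReal.tsum_le_tsum
          intro p
          rw [en]
          gcongr
          exact hab p
      _ ≤ (∑' p : Fin N → Φ, eLpNorm (Upath ψ (fun i => ((p i : ℕ))) g) 2 volume ^ 2) ^ (1/2 : ℝ)
            + (∑' p : Fin N → Φ, eLpNorm (Upath ψ (fun i => ((p i : ℕ))) f
                - Upath ψ (fun i => ((p i : ℕ))) g) 2 volume ^ 2) ^ (1/2 : ℝ) :=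
          tsum_sq_add_le _ _
      _ ≤ (WNe ψ Φ N g) ^ (1/2 : ℝ) + (en (f - g)) ^ (1/2 : ℝ) := by
          apply add_le_add
          · apply ENNReal.rpow_le_rpow _ (by norm_num)
            exact le_of_eq rfl
          · exact ENNReal.rpow_le_rpow (key N f g hf hg) (by norm_num)
      _ = (WNe ψ Φ N g) ^ (1/2 : ℝ) + eLpNorm (f - g) 2 volume := by
          congr 1
          rw [en, ← ENNReal.rpow_natCast (eLpNorm (f - g) 2 volume) 2, ← ENNReal.rpow_mul]
          norm_num
  -- finiteness
  have hfinW : ∀ f : Ed d → ℂ, MemLp f 2 volume → WNe ψ Φ N f ≠ ⊤ := by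
    intro f hf
    have h := key N f 0 hf MemLp.zero
    simp only [Upath_zero, sub_zero] at h
    rw [WNe]
    exact (lt_of_le_of_lt h (henf f hf)).ne
  -- Lipschitz estimate for the square root of the energy remainder
  have hsle : ∀ F G : Lp ℂ 2 (volume : Measure (Ed d)),
      ((WNe ψ Φ N ⇑F) ^ (1/2:ℝ)).toReal ≤ ((WNe ψ Φ N ⇑G) ^ (1/2:ℝ)).toReal + dist F G := by
    intro F G
    have hF := Lp.memLp F
    have hG := Lp.memLp G
    have h := sqrtdiff ⇑F ⇑G hF hG
    have hGfin : (WNe ψ Φ N ⇑G) ^ (1/2:ℝ) ≠ ⊤ :=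
      ENNReal.rpow_ne_top_of_nonneg (by norm_num) (hfinW ⇑G hG)
    have hdfin : eLpNorm (⇑F - ⇑G) 2 volume ≠ ⊤ := (hF.sub hG).2.ne
    have h2 := ENNReal.toReal_mono (ENNReal.add_ne_top.2 ⟨hGfin, hdfin⟩) h
    rw [ENNReal.toReal_add hGfin hdfin] at h2
    rwa [Lp.dist_def]
  have hlip : LipschitzWith 1 (fun F : Lp ℂ 2 (volume : Measure (Ed d)) =>
      ((WNe ψ Φ N ⇑F) ^ (1/2:ℝ)).toReal) := by
    refine LipschitzWith.of_dist_le_mul fun F G => ?_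
    rw [NNReal.coe_one, one_mul, Real.dist_eq, abs_sub_le_iff]
    constructor
    · have h1 := hsle F G; linarith
    · have h1 := hsle G F
      rw [dist_comm G F] at h1
      linarith
  refine (hlip.continuous.pow 2).congr fun F => ?_
  rw [WNr, Pi.pow_apply, ← ENNReal.toReal_pow]
  congr 1
  rw [← ENNReal.rpow_natCast _ 2, ← ENNReal.rpow_mul]
  norm_num [ENNReal.rpow_one]
end
end
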